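/- In the regression lower-bound construction, for every split j ∈ {0,1,...,N} with j ∉ {2i−1, 2i}, the mean squared loss satisfies L(j) ≥ 50/201. -/

import Mathlib

open Finset

/-- SSE of the data points of a multiset dataset whose feature value lies in range `R`. -/
noncomputable def SSE (data : Multiset (ℕ × ℝ)) (R : Finset ℕ) : ℝ :=
  let d := data.filter fun p => p.1 ∈ R
  if d ≠ 0 then
    (d.map fun p => p.2 ^ 2).sum - ((d.map fun p => p.2).sum) ^ 2 / (Multiset.card d : ℝ)
  else 0

/-- Mean squared loss of split `j ∈ {0,…,N}`. -/
noncomputable def L (N : ℕ) (data : Multiset (ℕ × ℝ)) (j : ℕ) : ℝ :=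
  (1 / (Multiset.card data : ℝ)) *
    (SSE data (Finset.Icc 1 j) + SSE data (Finset.Icc (j + 1) N))

/-- The regression lower-bound dataset: for each `k ∈ {1,…,n}`, `B = n` copies of `(2k, z_k)`;
`T = 100n²` copies of `(2i−1, 0)`; and `T` copies of `(2i+1, 1)`. -/
def regData (n i : ℕ) (z : ℕ → ℝ) : Multiset (ℕ × ℝ) :=
  (∑ k ∈ Finset.Icc 1 n, Multiset.replicate n (2 * k, z k))
  + Multiset.replicate (100 * n ^ 2) (2 * i - 1, (0 : ℝ))
  + Multiset.replicate (100 * n ^ 2) (2 * i + 1, (1 : ℝ))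

/-! Any split `j ∉ {2i−1, 2i}` leaves the `T` zeros at `2i−1` and the `T` ones at `2i+1` on the
same side. Adding points never decreases the sum of squared deviations (it is superadditive), so
that side has SSE at least that of `T` zeros and `T` ones, namely `T/2 = 50n²`, out of `m = 201n²`
points. -/

namespace Multiset

/-- `∑ (x - mean)²` in the form `∑ x² - (∑ x)² / n` used by `SSE`; it is `0` on the empty
multiset because `0 / 0 = 0`. -/
noncomputable def sumSqDev (d : Multiset ℝ) : ℝ :=
  (d.map (· ^ 2)).sum - d.sum ^ 2 / card d

@[simp]
theorem sumSqDev_zero : sumSqDev 0 = 0 := by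
  simp [sumSqDev]

@[simp]
theorem sumSqDev_singleton (x : ℝ) : sumSqDev {x} = 0 := by
  simp [sumSqDev]

theorem sumSqDev_add_le_sumSqDev_add (a b : Multiset ℝ) :
    sumSqDev a + sumSqDev b ≤ sumSqDev (a + b) := by
  rcases eq_or_ne a 0 with rfl | ha
  · simp
  rcases eq_or_ne b 0 with rfl | hb
  · simp
  have hca : (0 : ℝ) < card a := by exact_mod_cast card_pos.2 ha
  have hcb : (0 : ℝ) < card b := by exact_mod_cast card_pos.2 hb
  have gap : sumSqDev (a + b) - (sumSqDev a + sumSqDev b) =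
      (a.sum * card b - b.sum * card a) ^ 2 / (card a * card b * (card a + card b)) := by
    simp only [sumSqDev, map_add, sum_add, card_add, Nat.cast_add]
    field_simp
    ring
  have : 0 ≤ sumSqDev (a + b) - (sumSqDev a + sumSqDev b) := by
    rw [gap]
    positivity
  linarith

theorem sumSqDev_nonneg (d : Multiset ℝ) : 0 ≤ sumSqDev d := by
  induction d using Multiset.induction_on with
  | empty => simp
  | cons x d ih =>
    rw [← singleton_add]
    linarith [sumSqDev_add_le_sumSqDev_add {x} d, sumSqDev_singleton x]

theorem sumSqDev_replicate_zero_add_replicate_one (T : ℕ) :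
    sumSqDev (replicate T 0 + replicate T 1) = T / 2 := by
  rcases Nat.eq_zero_or_pos T with rfl | hT
  · simp
  have hT' : (T : ℝ) ≠ 0 := by positivity
  simp only [sumSqDev, map_add, map_replicate, sum_add, sum_replicate, card_add, card_replicate]
  push_cast
  field_simp
  ring

theorem half_le_sumSqDev_of_le {T : ℕ} {d : Multiset ℝ}
    (h : replicate T 0 + replicate T 1 ≤ d) : (T : ℝ) / 2 ≤ sumSqDev d := by
  obtain ⟨e, rfl⟩ := le_iff_exists_add.1 h
  rw [← sumSqDev_replicate_zero_add_replicate_one]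
  linarith [sumSqDev_add_le_sumSqDev_add (replicate T 0 + replicate T 1) e, sumSqDev_nonneg e]

end Multiset

theorem SSE_eq_sumSqDev (data : Multiset (ℕ × ℝ)) (R : Finset ℕ) :
    SSE data R = ((data.filter fun p => p.1 ∈ R).map Prod.snd).sumSqDev := by
  unfold SSE
  dsimp only
  split_ifs with h
  · simp [Multiset.sumSqDev, Multiset.map_map]
  · rw [not_not.1 h]
    simp

theorem SSE_nonneg (data : Multiset (ℕ × ℝ)) (R : Finset ℕ) : 0 ≤ SSE data R := by
  rw [SSE_eq_sumSqDev]
  exact Multiset.sumSqDev_nonneg _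

theorem half_le_SSE {data : Multiset (ℕ × ℝ)} {R : Finset ℕ} {T x y : ℕ} (hx : x ∈ R)
    (hy : y ∈ R)
    (h : Multiset.replicate T (x, (0 : ℝ)) + Multiset.replicate T (y, (1 : ℝ)) ≤ data) :
    (T : ℝ) / 2 ≤ SSE data R := by
  set pts := Multiset.replicate T (x, (0 : ℝ)) + Multiset.replicate T (y, (1 : ℝ))
  have hpts : (pts.filter fun p => p.1 ∈ R) = pts :=
    Multiset.filter_eq_self.2 fun p hp => by
      rcases Multiset.mem_add.1 hp with hp | hp <;> rw [Multiset.eq_of_mem_replicate hp] <;>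
        assumption
  rw [SSE_eq_sumSqDev]
  apply Multiset.half_le_sumSqDev_of_le
  calc Multiset.replicate T 0 + Multiset.replicate T 1
      = (pts.filter fun p => p.1 ∈ R).map Prod.snd := by
        simp only [hpts, pts, Multiset.map_add, Multiset.map_replicate]
    _ ≤ _ := Multiset.map_le_map (Multiset.filter_le_filter _ h)

theorem card_regData (n i : ℕ) (z : ℕ → ℝ) :
    Multiset.card (regData n i z) = 201 * n ^ 2 := by
  simp only [regData, Multiset.card_add, Multiset.card_sum, Multiset.card_replicate, sum_const,
    smul_eq_mul, Nat.card_Icc, Nat.add_sub_cancel]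
  ring

theorem replicate_add_replicate_le_regData (n i : ℕ) (z : ℕ → ℝ) :
    Multiset.replicate (100 * n ^ 2) (2 * i - 1, (0 : ℝ)) +
      Multiset.replicate (100 * n ^ 2) (2 * i + 1, (1 : ℝ)) ≤ regData n i z := by
  rw [regData, add_assoc]
  exact Multiset.le_add_left _ _

theorem reg_far_splits_loss_general (n : ℕ) (i : ℕ) (hi : i ∈ Finset.Icc 1 n)
    (z : ℕ → ℝ) (j : ℕ) (hj1 : j ≠ 2 * i - 1) (hj2 : j ≠ 2 * i) :
    (50 : ℝ) / 201 ≤ L (2 * n + 1) (regData n i z) j := by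
  obtain ⟨hi1, hin⟩ := Finset.mem_Icc.1 hi
  have hT := replicate_add_replicate_le_regData n i z
  have hSSE : ((100 * n ^ 2 : ℕ) : ℝ) / 2 ≤
      SSE (regData n i z) (Icc 1 j) + SSE (regData n i z) (Icc (j + 1) (2 * n + 1)) := by
    rcases (by omega : j + 1 ≤ 2 * i - 1 ∨ 2 * i + 1 ≤ j) with h | h
    · linarith [SSE_nonneg (regData n i z) (Icc 1 j),
        half_le_SSE (R := Icc (j + 1) (2 * n + 1)) (by simp; omega) (by simp; omega) hT]
    · linarith [SSE_nonneg (regData n i z) (Icc (j + 1) (2 * n + 1)),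
        half_le_SSE (R := Icc 1 j) (by simp; omega) (by simp; omega) hT]
  have hn : (0 : ℝ) < n ^ 2 := pow_pos (by exact_mod_cast hi1.trans hin) 2
  rw [L, card_regData, one_div, inv_mul_eq_div, le_div_iff₀ (by push_cast; positivity)]
  push_cast at hSSE ⊢
  linarith

/-- In the regression lower-bound construction, every split `j ∉ {2i−1, 2i}` has mean
squared loss at least `50/201`. -/
theorem reg_far_splits_loss (n : ℕ) (hn : 1 ≤ n) (i : ℕ) (hi : i ∈ Finset.Icc 1 n)
    (z : ℕ → ℝ) (hz : ∀ k, z k = 0 ∨ z k = 1)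
    (j : ℕ) (hj : j ≤ 2 * n + 1) (hj1 : j ≠ 2 * i - 1) (hj2 : j ≠ 2 * i) :
    (50 : ℝ) / 201 ≤ L (2 * n + 1) (regData n i z) j :=
  reg_far_splits_loss_general n i hi z j hj1 hj2
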